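/- arXiv:quant-ph/0505110 — 4 statements merged into one kernel-verified Lean document; each statement's English description precedes it below -/
import Mathlib

section
/- A channel Λ on the bipartite system A × B is A↛B semicausal if and only if Tr_A ∘ Λ ∘ (D_A ⊗ id) = Tr_A ∘ Λ, i.e., if and only if for every state ρ on A × B one has Tr_A(Λ[(D_A ⊗ id)[ρ]]) = Tr_A(Λ[ρ]). -/
open Matrix BigOperators
open scoped Kronecker ComplexOrder

noncomputable section

/-- Partial trace over the `A` factor. -/
def trA {A B : Type*} [Fintype A] (ρ : Matrix (A × B) (A × B) ℂ) : Matrix B B ℂ :=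
  Matrix.of fun b b' => ∑ a, ρ (a, b) (a, b')

/-- Partial trace over the `B` factor. -/
def trB {A B : Type*} [Fintype B] (ρ : Matrix (A × B) (A × B) ℂ) : Matrix A A ℂ :=
  Matrix.of fun a a' => ∑ b, ρ (a, b) (a', b)

/-- A state: positive semidefinite matrix of trace 1. -/
def IsState {n : Type*} [Fintype n] (ρ : Matrix n n ℂ) : Prop :=
  ρ.PosSemidef ∧ ρ.trace = 1

/-- A channel: a map admitting a Kraus representation `Λ[X] = ∑ i, K i * X * (K i)ᴴ`
with `∑ i, (K i)ᴴ * K i = 1` (completely positive and trace-preserving). -/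
def IsChannel {n : Type*} [Fintype n] [DecidableEq n]
    (Λ : Matrix n n ℂ → Matrix n n ℂ) : Prop :=
  ∃ (m : ℕ) (K : Fin m → Matrix n n ℂ),
    (∀ X, Λ X = ∑ i, K i * X * (K i)ᴴ) ∧ (∑ i, (K i)ᴴ * K i = 1)

/-- The induced map `Γ ⊗ id` on the bipartite system, acting blockwise. -/
def tensIdA {A B : Type*} (Γ : Matrix A A ℂ → Matrix A A ℂ)
    (ρ : Matrix (A × B) (A × B) ℂ) : Matrix (A × B) (A × B) ℂ :=
  Matrix.of fun p q => Γ (Matrix.of fun a a' => ρ (a, p.2) (a', q.2)) p.1 q.1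

/-- The induced map `id ⊗ Γ` on the bipartite system, acting blockwise. -/
def tensIdB {A B : Type*} (Γ : Matrix B B ℂ → Matrix B B ℂ)
    (ρ : Matrix (A × B) (A × B) ℂ) : Matrix (A × B) (A × B) ℂ :=
  Matrix.of fun p q => Γ (Matrix.of fun b b' => ρ (p.1, b) (q.1, b')) p.2 q.2

/-- `Λ` is A↛B semicausal: no channel applied by Alice beforehand affects Bob's
reduced output state. -/
def SemicausalAtoB {A B : Type*} [Fintype A] [Fintype B] [DecidableEq A]
    (Λ : Matrix (A × B) (A × B) ℂ → Matrix (A × B) (A × B) ℂ) : Prop :=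
  ∀ ρ : Matrix (A × B) (A × B) ℂ, IsState ρ →
    ∀ Γ : Matrix A A ℂ → Matrix A A ℂ, IsChannel Γ →
      trA (Λ (tensIdA Γ ρ)) = trA (Λ ρ)

/-- `Λ` is A↚B semicausal: no channel applied by Bob beforehand affects Alice's
reduced output state. -/
def SemicausalBtoA {A B : Type*} [Fintype A] [Fintype B] [DecidableEq B]
    (Λ : Matrix (A × B) (A × B) ℂ → Matrix (A × B) (A × B) ℂ) : Prop :=
  ∀ ρ : Matrix (A × B) (A × B) ℂ, IsState ρ →
    ∀ Γ : Matrix B B ℂ → Matrix B B ℂ, IsChannel Γ →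
      trB (Λ (tensIdB Γ ρ)) = trB (Λ ρ)

/-- `Λ` is causal: both A↛B and A↚B semicausal. -/
def Causal {A B : Type*} [Fintype A] [Fintype B] [DecidableEq A] [DecidableEq B]
    (Λ : Matrix (A × B) (A × B) ℂ → Matrix (A × B) (A × B) ℂ) : Prop :=
  SemicausalAtoB Λ ∧ SemicausalBtoA Λ

/-- The totally depolarizing channel `D[X] = Tr(X)·I/|A|`. -/
def depol {A : Type*} [Fintype A] [DecidableEq A] : Matrix A A ℂ → Matrix A A ℂ :=
  fun X => (X.trace / (Fintype.card A : ℂ)) • (1 : Matrix A A ℂ)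

/-!
Taking `Γ = D_A` gives one direction, since `D_A` is a channel (Kraus operators `E_ab / √|A|`).
Conversely, `D_A` only sees the trace and every channel preserves it, so
`(D_A ⊗ id) ∘ (Γ ⊗ id) = D_A ⊗ id`. As `(Γ ⊗ id) ρ` is again a state, the hypothesis applied to it
and to `ρ` gives `Tr_A Λ (Γ ⊗ id) ρ = Tr_A Λ (D_A ⊗ id) ρ = Tr_A Λ ρ`.
-/

namespace IsChannel

variable {n : Type*} [Fintype n] [DecidableEq n] {Γ : Matrix n n ℂ → Matrix n n ℂ}

theorem of_kraus {ι : Type*} [Fintype ι] (K : ι → Matrix n n ℂ)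
    (hΓ : ∀ X, Γ X = ∑ i, K i * X * (K i)ᴴ) (hK : ∑ i, (K i)ᴴ * K i = 1) : IsChannel Γ := by
  let e := (Fintype.equivFin ι).symm
  exact ⟨_, K ∘ e, fun X => (hΓ X).trans (e.sum_comp _).symm, (e.sum_comp _).trans hK⟩

theorem trace_apply (hΓ : IsChannel Γ) (X : Matrix n n ℂ) : (Γ X).trace = X.trace := by
  obtain ⟨m, K, hΓ, hK⟩ := hΓ
  simp_rw [hΓ, trace_sum, trace_mul_cycle (K _), ← trace_sum, ← Finset.sum_mul, hK, one_mul]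

end IsChannel

theorem isChannel_depol {A : Type*} [Fintype A] [DecidableEq A] [Nonempty A] :
    IsChannel (depol (A := A)) := by
  set c : ℂ := (((Real.sqrt (Fintype.card A))⁻¹ : ℝ) : ℂ)
  have hc : starRingEnd ℂ c * c = (Fintype.card A : ℂ)⁻¹ := by
    rw [Complex.conj_ofReal, ← Complex.ofReal_mul, ← mul_inv,
      Real.mul_self_sqrt (Nat.cast_nonneg _), Complex.ofReal_inv, Complex.ofReal_natCast]
  refine IsChannel.of_kraus (fun p : A × A => single p.1 p.2 c) (fun X => ?_) ?_
  · ext i j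
    simp only [depol, Matrix.sum_apply, single_mul_mul_single, conjTranspose_single, single_apply,
      Matrix.smul_apply, one_apply, Fintype.sum_prod_type, ite_and,
      smul_eq_mul, mul_ite, mul_one, mul_zero, RCLike.star_def, Finset.sum_ite_irrel,
      Finset.sum_const_zero, Finset.sum_ite_eq', Finset.mem_univ, if_true]
    congr 1
    simp only [trace, diag_apply, ← Finset.sum_mul, ← Finset.mul_sum, div_eq_mul_inv, ← hc]
    ring
  · ext i j
    simp only [Matrix.sum_apply, single_mul_single_same, conjTranspose_single, single_apply,
      one_apply, Fintype.sum_prod_type, ite_and, RCLike.star_def,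
      Finset.sum_ite_eq', Finset.mem_univ, if_true]
    split_ifs
    · rw [Finset.sum_const, Finset.card_univ, nsmul_eq_mul, hc, mul_inv_cancel₀ (by simp)]
    · exact Finset.sum_const_zero

theorem tensIdA_tensIdA {A B : Type*} (Φ Γ : Matrix A A ℂ → Matrix A A ℂ)
    (ρ : Matrix (A × B) (A × B) ℂ) : tensIdA Φ (tensIdA Γ ρ) = tensIdA (Φ ∘ Γ) ρ :=
  rfl

section tensIdA

variable {A B : Type*} [Fintype A] [Fintype B]

theorem tensIdA_eq_sum_kraus [DecidableEq B] {Γ : Matrix A A ℂ → Matrix A A ℂ} {m : ℕ}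
    {K : Fin m → Matrix A A ℂ} (hΓ : ∀ X, Γ X = ∑ i, K i * X * (K i)ᴴ)
    (ρ : Matrix (A × B) (A × B) ℂ) :
    tensIdA Γ ρ = ∑ i, (K i ⊗ₖ (1 : Matrix B B ℂ)) * ρ * (K i ⊗ₖ (1 : Matrix B B ℂ))ᴴ := by
  ext ⟨a, b⟩ ⟨a', b'⟩
  simp [tensIdA, hΓ, Matrix.sum_apply, mul_apply, one_apply, Fintype.sum_prod_type,
    apply_ite (starRingEnd ℂ)]

theorem trace_tensIdA {Γ : Matrix A A ℂ → Matrix A A ℂ} (hΓ : ∀ X, (Γ X).trace = X.trace)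
    (ρ : Matrix (A × B) (A × B) ℂ) : (tensIdA Γ ρ).trace = ρ.trace := by
  have hblock (b : B) : ∑ a, tensIdA Γ ρ (a, b) (a, b) = ∑ a, ρ (a, b) (a, b) :=
    hΓ (Matrix.of fun a a' => ρ (a, b) (a', b))
  simp only [trace, diag, Fintype.sum_prod_type]
  rw [Finset.sum_comm, Finset.sum_congr rfl fun b _ => hblock b, Finset.sum_comm]

theorem Matrix.PosSemidef.tensIdA [DecidableEq A] {Γ : Matrix A A ℂ → Matrix A A ℂ}
    (hΓ : IsChannel Γ)
    {ρ : Matrix (A × B) (A × B) ℂ} (hρ : ρ.PosSemidef) : (tensIdA Γ ρ).PosSemidef := by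
  classical
  obtain ⟨m, K, hK, -⟩ := hΓ
  rw [tensIdA_eq_sum_kraus hK]
  exact posSemidef_sum _ fun i _ => hρ.mul_mul_conjTranspose_same _

theorem IsState.tensIdA [DecidableEq A] {Γ : Matrix A A ℂ → Matrix A A ℂ} (hΓ : IsChannel Γ)
    {ρ : Matrix (A × B) (A × B) ℂ} (hρ : IsState ρ) : IsState (tensIdA Γ ρ) :=
  ⟨hρ.1.tensIdA hΓ, (trace_tensIdA hΓ.trace_apply ρ).trans hρ.2⟩

end tensIdA

theorem depol_comp {A : Type*} [Fintype A] [DecidableEq A] {Γ : Matrix A A ℂ → Matrix A A ℂ}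
    (hΓ : ∀ X, (Γ X).trace = X.trace) : depol ∘ Γ = depol := by
  funext X
  simp only [Function.comp_apply, depol, hΓ]

theorem stmt_2_general {A B : Type*} [Fintype A] [Fintype B] [DecidableEq A]
    [Nonempty A]
    (Λ : Matrix (A × B) (A × B) ℂ → Matrix (A × B) (A × B) ℂ) :
    SemicausalAtoB Λ ↔
      ∀ ρ : Matrix (A × B) (A × B) ℂ, IsState ρ →
        trA (Λ (tensIdA depol ρ)) = trA (Λ ρ) := by
  refine ⟨fun h ρ hρ => h ρ hρ depol isChannel_depol, fun h ρ hρ Γ hΓ => ?_⟩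
  calc trA (Λ (tensIdA Γ ρ))
      = trA (Λ (tensIdA depol (tensIdA Γ ρ))) := (h _ (hρ.tensIdA hΓ)).symm
    _ = trA (Λ (tensIdA depol ρ)) := by rw [tensIdA_tensIdA, depol_comp hΓ.trace_apply]
    _ = trA (Λ ρ) := h ρ hρ

/-- a channel is A↛B semicausal iff `Tr_A ∘ Λ ∘ (D_A ⊗ id) = Tr_A ∘ Λ`
on states. -/
theorem stmt_2 {A B : Type*} [Fintype A] [Fintype B] [DecidableEq A] [DecidableEq B]
    [Nonempty A] [Nonempty B]
    (Λ : Matrix (A × B) (A × B) ℂ → Matrix (A × B) (A × B) ℂ) (hΛ : IsChannel Λ) :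
    SemicausalAtoB Λ ↔
      ∀ ρ : Matrix (A × B) (A × B) ℂ, IsState ρ →
        trA (Λ (tensIdA depol ρ)) = trA (Λ ρ) :=
  stmt_2_general Λ
end
end

section
/- Let Λ be an A↛B semicausal channel on the bipartite system A × B. Define the reduced map Λ_B on B-indexed matrices by Λ_B[σ] = Tr_A(Λ[(I_A/|A|) ⊗ σ]). Then Λ_B is a channel on B, and for every state ρ on A × B one has Tr_A(Λ[ρ]) = Λ_B[Tr_A(ρ)]; in particular the B-marginal of the output depends only on the B-marginal of the input, and the definition of Λ_B does not depend on the choice of the A-factor (I_A/|A| may be replaced by any state on A). -/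
open Matrix BigOperators
open scoped Kronecker ComplexOrder

noncomputable section

/-- The reduced map of `Λ` on `B`: `Λ_B[σ] = Tr_A(Λ[(I_A/|A|) ⊗ σ])`. -/
def redB {A B : Type*} [Fintype A] [Fintype B] [DecidableEq A]
    (Λ : Matrix (A × B) (A × B) ℂ → Matrix (A × B) (A × B) ℂ)
    (σ : Matrix B B ℂ) : Matrix B B ℂ :=
  trA (Λ ((((Fintype.card A : ℂ))⁻¹ • (1 : Matrix A A ℂ)) ⊗ₖ σ))

/-!
Applying Alice's completely depolarizing channel `X ↦ Tr X • I_A/|A|` turns `ρ` into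
`I_A/|A| ⊗ Tr_A ρ`, so semicausality gives `Tr_A Λ[ρ] = Λ_B[Tr_A ρ]`; for `ρ = τ ⊗ σ` the
right-hand side is `Λ_B[σ]`. If `K i` are Kraus operators of `Λ`, then the `B`-blocks
`⟨a| K i |a'⟩` (read off through `Matrix.comp`), scaled by `|A|^(-1/2)`, are Kraus operators
of `Λ_B`.
-/

lemma isChannel_of_kraus {ι n : Type*} [Fintype ι] [Fintype n] [DecidableEq n]
    {Λ : Matrix n n ℂ → Matrix n n ℂ} (K : ι → Matrix n n ℂ)
    (hΛ : ∀ X, Λ X = ∑ i, K i * X * (K i)ᴴ) (hK : ∑ i, (K i)ᴴ * K i = 1) :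
    IsChannel Λ := by
  let e := (Fintype.equivFin ι).symm
  refine ⟨Fintype.card ι, K ∘ e, fun X => ?_, ?_⟩
  · rw [hΛ, ← e.sum_comp]; rfl
  · rw [← hK, ← e.sum_comp]; rfl

lemma isChannel_of_kraus_smul {ι n : Type*} [Fintype ι] [Fintype n] [DecidableEq n]
    {Λ : Matrix n n ℂ → Matrix n n ℂ} (K : ι → Matrix n n ℂ) {r : ℝ} (hr : 0 ≤ r)
    (hΛ : ∀ X, Λ X = (r : ℂ) • ∑ i, K i * X * (K i)ᴴ)
    (hK : (r : ℂ) • ∑ i, (K i)ᴴ * K i = 1) :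
    IsChannel Λ := by
  have hsq : ((√r : ℝ) : ℂ) * ((√r : ℝ) : ℂ) = r := by
    rw [← Complex.ofReal_mul, Real.mul_self_sqrt hr]
  refine isChannel_of_kraus (fun i => ((√r : ℝ) : ℂ) • K i) (fun X => ?_) ?_
  · simp only [hΛ, conjTranspose_smul, Complex.star_def, Complex.conj_ofReal, smul_mul_assoc,
      mul_smul_comm, smul_smul, hsq, Finset.smul_sum]
  · simp only [← hK, conjTranspose_smul, Complex.star_def, Complex.conj_ofReal, smul_mul_assoc,
      mul_smul_comm, smul_smul, hsq, Finset.smul_sum]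

def completelyDepolarizing (A : Type*) [Fintype A] [DecidableEq A] (X : Matrix A A ℂ) :
    Matrix A A ℂ :=
  X.trace • ((Fintype.card A : ℂ)⁻¹ • (1 : Matrix A A ℂ))

lemma isChannel_completelyDepolarizing {A : Type*} [Fintype A] [DecidableEq A] [Nonempty A] :
    IsChannel (completelyDepolarizing A) := by
  refine isChannel_of_kraus_smul (r := (Fintype.card A : ℝ)⁻¹)
    (fun p : A × A => single p.1 p.2 (1 : ℂ)) (by positivity) (fun X => ?_) ?_
  · simp only [completelyDepolarizing, conjTranspose_single, star_one, single_mul_mul_single,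
      one_mul, mul_one, Fintype.sum_prod_type]
    rw [Finset.sum_comm]
    simp only [sum_single_eq_diagonal, ← smul_one_eq_diagonal, ← Finset.sum_smul]
    rw [smul_comm]
    push_cast
    rfl
  · simp only [conjTranspose_single, star_one, single_mul_single_same, mul_one,
      Fintype.sum_prod_type, sum_single_one, Finset.sum_const, Finset.card_univ]
    push_cast
    rw [← Nat.cast_smul_eq_nsmul ℂ, smul_smul, inv_mul_cancel₀ (by positivity), one_smul]

lemma tensIdA_completelyDepolarizing {A B : Type*} [Fintype A] [Fintype B] [DecidableEq A]
    (ρ : Matrix (A × B) (A × B) ℂ) :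
    tensIdA (completelyDepolarizing A) ρ
      = ((Fintype.card A : ℂ)⁻¹ • (1 : Matrix A A ℂ)) ⊗ₖ trA ρ := by
  ext ⟨a, b⟩ ⟨a', b'⟩
  simp only [tensIdA, completelyDepolarizing, trA, trace, diag, of_apply, Matrix.smul_apply,
    kronecker_apply, smul_eq_mul]
  ring

lemma trA_kronecker {A B : Type*} [Fintype A] (τ : Matrix A A ℂ) (σ : Matrix B B ℂ) :
    trA (τ ⊗ₖ σ) = τ.trace • σ := by
  ext b b'
  simp [trA, trace, Finset.sum_mul]

lemma trA_sum {ι A B : Type*} [Fintype A] (s : Finset ι) (M : ι → Matrix (A × B) (A × B) ℂ) :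
    trA (∑ i ∈ s, M i) = ∑ i ∈ s, trA (M i) := by
  ext b b'
  simp only [trA, of_apply, Matrix.sum_apply]
  exact Finset.sum_comm

lemma IsState.kronecker {A B : Type*} [Fintype A] [Fintype B] [DecidableEq B]
    {τ : Matrix A A ℂ} {σ : Matrix B B ℂ} (hτ : IsState τ) (hσ : IsState σ) : IsState (τ ⊗ₖ σ) :=
  ⟨hτ.1.kronecker hσ.1, by rw [trace_kronecker, hτ.2, hσ.2, one_mul]⟩

lemma SemicausalAtoB.trA_eq_redB_trA {A B : Type*} [Fintype A] [Fintype B] [DecidableEq A]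
    [Nonempty A] {Λ : Matrix (A × B) (A × B) ℂ → Matrix (A × B) (A × B) ℂ} (hsc : SemicausalAtoB Λ)
    {ρ : Matrix (A × B) (A × B) ℂ} (hρ : IsState ρ) : trA (Λ ρ) = redB Λ (trA ρ) := by
  rw [← hsc ρ hρ _ isChannel_completelyDepolarizing, tensIdA_completelyDepolarizing, redB]

namespace Matrix

variable {I J R : Type*}

lemma comp_symm_conjTranspose [Star R] (M : Matrix (I × J) (I × J) R) :
    (comp I I J J R).symm Mᴴ = ((comp I I J J R).symm M)ᴴ :=
  rfl

lemma comp_symm_mul [Fintype I] [Fintype J] [NonUnitalNonAssocSemiring R]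
    (M N : Matrix (I × J) (I × J) R) :
    (comp I I J J R).symm (M * N) = (comp I I J J R).symm M * (comp I I J J R).symm N :=
  map_mul (compRingEquiv I J R).symm M N

lemma comp_symm_one [Fintype I] [Fintype J] [DecidableEq I] [DecidableEq J]
    [NonAssocSemiring R] : (comp I I J J R).symm 1 = 1 :=
  map_one (compRingEquiv I J R).symm

lemma comp_symm_smul_one_kronecker [DecidableEq I] [CommSemiring R] (c : R)
    (σ : Matrix J J R) :
    (comp I I J J R).symm ((c • 1) ⊗ₖ σ) = diagonal fun _ => c • σ := by
  ext i i' j j'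
  by_cases h : i = i' <;> simp [h]

end Matrix

lemma trA_eq_trace_comp_symm {A B : Type*} [Fintype A] (M : Matrix (A × B) (A × B) ℂ) :
    trA M = ((comp A A B B ℂ).symm M).trace := by
  ext b b'
  simp [trA, trace, Matrix.sum_apply]

lemma trA_mul_smul_one_kronecker_mul_conjTranspose {A B : Type*} [Fintype A] [Fintype B]
    [DecidableEq A] (K : Matrix (A × B) (A × B) ℂ) (c : ℂ) (σ : Matrix B B ℂ) :
    trA (K * ((c • 1) ⊗ₖ σ) * Kᴴ) = c • ∑ a, ∑ a',
      (comp A A B B ℂ).symm K a a' * σ * ((comp A A B B ℂ).symm K a a')ᴴ := by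
  rw [trA_eq_trace_comp_symm, comp_symm_mul, comp_symm_mul, comp_symm_conjTranspose,
    comp_symm_smul_one_kronecker]
  simp only [trace, diag, mul_apply (M := _ * _), mul_diagonal, conjTranspose_apply,
    star_eq_conjTranspose, Finset.smul_sum, mul_smul_comm, smul_mul_assoc]

lemma sum_conjTranspose_mul_comp_symm {A B : Type*} [Fintype A] [Fintype B]
    (K : Matrix (A × B) (A × B) ℂ) (a' : A) :
    ∑ a, ((comp A A B B ℂ).symm K a a')ᴴ * (comp A A B B ℂ).symm K a a'
      = (comp A A B B ℂ).symm (Kᴴ * K) a' a' := by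
  simp only [comp_symm_mul, comp_symm_conjTranspose, mul_apply, conjTranspose_apply,
    star_eq_conjTranspose]

lemma IsChannel.redB {A B : Type*} [Fintype A] [Fintype B] [DecidableEq A] [DecidableEq B]
    [Nonempty A] {Λ : Matrix (A × B) (A × B) ℂ → Matrix (A × B) (A × B) ℂ} (hΛ : IsChannel Λ) :
    IsChannel (redB Λ) := by
  obtain ⟨m, K, hΛK, hK⟩ := hΛ
  refine isChannel_of_kraus_smul (r := (Fintype.card A : ℝ)⁻¹)
    (fun p : Fin m × A × A => (comp A A B B ℂ).symm (K p.1) p.2.1 p.2.2) (by positivity)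
    (fun σ => ?_) ?_
  · simp only [_root_.redB, hΛK, trA_sum, trA_mul_smul_one_kronecker_mul_conjTranspose,
      Fintype.sum_prod_type, Finset.smul_sum]
    push_cast
    rfl
  · simp only [Fintype.sum_prod_type]
    rw [Finset.sum_congr rfl fun i _ => Finset.sum_comm, Finset.sum_comm]
    have hsum : ∑ i, (comp A A B B ℂ).symm ((K i)ᴴ * K i) = 1 := by
      rw [← comp_symm_one, ← hK, ← compAddEquiv_symm_apply, map_sum]
      rfl
    have hblock : ∀ a, ∑ i, (comp A A B B ℂ).symm ((K i)ᴴ * K i) a a = 1 := fun a => by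
      rw [← Matrix.sum_apply, hsum, one_apply_eq]
    simp only [sum_conjTranspose_mul_comp_symm, hblock, Finset.sum_const, Finset.card_univ]
    push_cast
    rw [← Nat.cast_smul_eq_nsmul ℂ, smul_smul, inv_mul_cancel₀ (by positivity), one_smul]

theorem stmt_8_general {A B : Type*} [Fintype A] [Fintype B] [DecidableEq A] [DecidableEq B]
    [Nonempty A]
    (Λ : Matrix (A × B) (A × B) ℂ → Matrix (A × B) (A × B) ℂ)
    (hΛ : IsChannel Λ) (hsc : SemicausalAtoB Λ) :
    IsChannel (redB Λ) ∧
    (∀ ρ : Matrix (A × B) (A × B) ℂ, IsState ρ → trA (Λ ρ) = redB Λ (trA ρ)) ∧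
    (∀ τ : Matrix A A ℂ, IsState τ → ∀ σ : Matrix B B ℂ, IsState σ →
      trA (Λ (τ ⊗ₖ σ)) = redB Λ σ) := by
  refine ⟨hΛ.redB, fun ρ hρ => hsc.trA_eq_redB_trA hρ, fun τ hτ σ hσ => ?_⟩
  rw [hsc.trA_eq_redB_trA (hτ.kronecker hσ), trA_kronecker, hτ.2, one_smul]

/-- for an A↛B semicausal channel the reduced map `Λ_B` is a channel,
the B-marginal of the output depends only on the B-marginal of the input, and the
definition of `Λ_B` is independent of the chosen state on the A factor. -/
theorem stmt_8 {A B : Type*} [Fintype A] [Fintype B] [DecidableEq A] [DecidableEq B]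
    [Nonempty A] [Nonempty B]
    (Λ : Matrix (A × B) (A × B) ℂ → Matrix (A × B) (A × B) ℂ)
    (hΛ : IsChannel Λ) (hsc : SemicausalAtoB Λ) :
    IsChannel (redB Λ) ∧
    (∀ ρ : Matrix (A × B) (A × B) ℂ, IsState ρ → trA (Λ ρ) = redB Λ (trA ρ)) ∧
    (∀ τ : Matrix A A ℂ, IsState τ → ∀ σ : Matrix B B ℂ, IsState σ →
      trA (Λ (τ ⊗ₖ σ)) = redB Λ σ) :=
  stmt_8_general Λ hΛ hsc
end
end

section
/- Let U be a unitary matrix on ℂ^A ⊗ ℂ^B and let |φ⟩ ∈ ℂ^A be a unit vector. Suppose there is a single A-indexed matrix ρ_A such that Tr_B[ U (|φ⟩⟨φ| ⊗ |ψ⟩⟨ψ|) U† ] = ρ_A for every unit vector |ψ⟩ ∈ ℂ^B. Then ρ_A is a rank-one projection; equivalently, U(|φ⟩ ⊗ |ψ⟩) is a product vector (a simple tensor) for every unit vector |ψ⟩ ∈ ℂ^B. -/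
open Matrix BigOperators
open scoped Kronecker ComplexOrder

noncomputable section

/-- The tensor (Kronecker) product of two vectors. -/
def vtens {A B : Type*} (x : A → ℂ) (y : B → ℂ) : A × B → ℂ := fun p => x p.1 * y p.2

/-- The rank-one projector `|v⟩⟨v|` onto a vector `v`. -/
def projv {n : Type*} (v : n → ℂ) : Matrix n n ℂ :=
  Matrix.of fun i j => v i * star (v j)

lemma conj_unitary_projv {n : Type*} [Fintype n] (U : Matrix n n ℂ) (w : n → ℂ) :
    U * projv w * Uᴴ = projv (U *ᵥ w) := by
  ext p q
  simp only [Matrix.mul_apply, projv, Matrix.of_apply, Matrix.conjTranspose_apply,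
    Matrix.mulVec, dotProduct, star_sum, star_mul', Finset.sum_mul, Finset.mul_sum]
  refine Finset.sum_congr rfl fun j _ => Finset.sum_congr rfl fun i _ => ?_
  ring

lemma vtens_norm {A B : Type*} [Fintype A] [Fintype B] (x : A → ℂ) (y : B → ℂ) :
    ∑ p : A × B, star (vtens x y p) * vtens x y p
      = (∑ a, star (x a) * x a) * (∑ b, star (y b) * y b) := by
  rw [Finset.sum_mul_sum, Fintype.sum_prod_type]
  refine Finset.sum_congr rfl fun a _ => Finset.sum_congr rfl fun b _ => ?_
  simp only [vtens, star_mul']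
  ring

lemma unitary_norm {n : Type*} [Fintype n] [DecidableEq n] (U : Matrix n n ℂ)
    (hU : U ∈ Matrix.unitaryGroup n ℂ) (x : n → ℂ) :
    ∑ p, star ((U *ᵥ x) p) * (U *ᵥ x) p = ∑ i, star (x i) * x i := by
  have h1 : star U * U = 1 := hU.1
  calc ∑ p, star ((U *ᵥ x) p) * (U *ᵥ x) p
      = star (U *ᵥ x) ⬝ᵥ (U *ᵥ x) := rfl
    _ = (star x ᵥ* Uᴴ) ⬝ᵥ (U *ᵥ x) := by rw [star_mulVec]
    _ = ((star x ᵥ* Uᴴ) ᵥ* U) ⬝ᵥ x := by rw [Matrix.dotProduct_mulVec]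
    _ = (star x ᵥ* (Uᴴ * U)) ⬝ᵥ x := by rw [Matrix.vecMul_vecMul]
    _ = ∑ i, star (x i) * x i := by
        rw [show Uᴴ * U = 1 from by rw [← Matrix.star_eq_conjTranspose]; exact h1]
        simp [dotProduct]

lemma trace_mul_conjT {m n : Type*} [Fintype m] [Fintype n] (X : Matrix m n ℂ) :
    Matrix.trace (X * Xᴴ) = ∑ i, ∑ j, X i j * star (X i j) := by
  simp [Matrix.trace, Matrix.diag, Matrix.mul_apply, Matrix.conjTranspose_apply]

/-- if `Tr_B[U(|φ⟩⟨φ| ⊗ |ψ⟩⟨ψ|)U†]` is the same matrix `ρ_A` for every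
unit vector `|ψ⟩`, then `ρ_A` is a rank-one projection; equivalently `U(φ ⊗ ψ)` is a
product vector for every unit vector `ψ`. -/
theorem stmt_12 {A B : Type*} [Fintype A] [Fintype B] [DecidableEq A] [DecidableEq B]
    [Nonempty A] [Nonempty B]
    (U : Matrix (A × B) (A × B) ℂ) (hU : U ∈ Matrix.unitaryGroup (A × B) ℂ)
    (φ : A → ℂ) (hφ : ∑ a, star (φ a) * φ a = 1)
    (ρA : Matrix A A ℂ)
    (h : ∀ ψ : B → ℂ, (∑ b, star (ψ b) * ψ b = 1) →
      trB (U * projv (vtens φ ψ) * Uᴴ) = ρA) :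
    (∃ χ : A → ℂ, (∑ a, star (χ a) * χ a = 1) ∧ ρA = projv χ) ∧
    (∀ ψ : B → ℂ, (∑ b, star (ψ b) * ψ b = 1) →
      ∃ (x : A → ℂ) (y : B → ℂ), U *ᵥ vtens φ ψ = vtens x y) := by
  classical
  -- entrywise version of the hypothesis
  have hG : ∀ ψ : B → ℂ, (∑ b, star (ψ b) * ψ b = 1) → ∀ a a' : A,
      ∑ c, (U *ᵥ vtens φ ψ) (a, c) * star ((U *ᵥ vtens φ ψ) (a', c)) = ρA a a' := by
    intro ψ hψ a a'
    have h1 := h ψ hψ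
    rw [conj_unitary_projv] at h1
    rw [← h1]
    rfl
  -- norm of U *ᵥ vtens φ ψ equals norm of ψ
  have hnorm : ∀ ψ : B → ℂ,
      ∑ p, star ((U *ᵥ vtens φ ψ) p) * (U *ᵥ vtens φ ψ) p = ∑ b, star (ψ b) * ψ b := by
    intro ψ
    rw [unitary_norm U hU, vtens_norm, hφ, one_mul]
  -- linearity in ψ
  have hlin : ∀ (z w : ℂ) (ψ1 ψ2 : B → ℂ) (p : A × B),
      (U *ᵥ vtens φ (z • ψ1 + w • ψ2)) p
        = z * (U *ᵥ vtens φ ψ1) p + w * (U *ᵥ vtens φ ψ2) p := by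
    intro z w ψ1 ψ2 p
    have hv : vtens φ (z • ψ1 + w • ψ2) = z • vtens φ ψ1 + w • vtens φ ψ2 := by
      funext q
      simp only [vtens, Pi.add_apply, Pi.smul_apply, smul_eq_mul]
      ring
    rw [hv, Matrix.mulVec_add, Matrix.mulVec_smul, Matrix.mulVec_smul]
    simp
  -- basis vectors
  set f : B → A × B → ℂ := fun b => U *ᵥ vtens φ (Pi.single b 1) with hf
  have hsingle_norm : ∀ b : B, ∑ c, star ((Pi.single b 1 : B → ℂ) c) * (Pi.single b 1 : B → ℂ) c = 1 := by
    intro b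
    simp [Pi.single_apply]
  have key1 : ∀ b a a', ∑ c, f b (a, c) * star (f b (a', c)) = ρA a a' := by
    intro b a a'
    exact hG _ (hsingle_norm b) a a'
  -- cross terms vanish
  have key2 : ∀ b b', b ≠ b' → ∀ a a',
      ∑ c, f b (a, c) * star (f b' (a', c)) = 0 := by
    intro b b' hbb a a'
    set S1 := ∑ c, f b (a, c) * star (f b' (a', c)) with hS1
    set S2 := ∑ c, f b' (a, c) * star (f b (a', c)) with hS2
    have step : ∀ z w : ℂ, star z * z + star w * w = 1 →
        z * star w * S1 + w * star z * S2 = 0 := by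
      intro z w hzw
      set ψ : B → ℂ := z • (Pi.single b 1 : B → ℂ) + w • (Pi.single b' 1 : B → ℂ) with hψdef
      have hterm : ∀ x, star (ψ x) * ψ x =
          (if x = b then star z * z else 0) + (if x = b' then star w * w else 0) := by
        intro x
        rcases eq_or_ne x b with hx | hx
        · subst hx
          simp [hψdef, Pi.single_apply, hbb, Ne.symm hbb]
        · rcases eq_or_ne x b' with hx' | hx'
          · subst hx'
            simp [hψdef, Pi.single_apply, hx, Ne.symm hx]
          · simp [hψdef, Pi.single_apply, hx, hx']
      have hψnorm : ∑ x, star (ψ x) * ψ x = 1 := by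
        rw [Finset.sum_congr rfl (fun x _ => hterm x), Finset.sum_add_distrib]
        simp only [Finset.sum_ite_eq', Finset.mem_univ, if_true]
        exact hzw
      have hGz := hG ψ hψnorm a a'
      have hexp : ∀ p : A × B, (U *ᵥ vtens φ ψ) p = z * f b p + w * f b' p :=
        fun p => hlin z w _ _ p
      rw [Finset.sum_congr rfl (fun c _ => by rw [hexp (a, c), hexp (a', c)])] at hGz
      have hexpand : ∑ c, (z * f b (a, c) + w * f b' (a, c))
            * star (z * f b (a', c) + w * f b' (a', c))
          = (star z * z) * (∑ c, f b (a, c) * star (f b (a', c)))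
          + (star w * w) * (∑ c, f b' (a, c) * star (f b' (a', c)))
          + z * star w * S1 + w * star z * S2 := by
        rw [hS1, hS2]
        simp only [Finset.mul_sum, ← Finset.sum_add_distrib]
        refine Finset.sum_congr rfl fun c _ => ?_
        simp only [star_add, star_mul']
        ring
      rw [hexpand, key1, key1] at hGz
      linear_combination hGz - ρA a a' * hzw
    set r : ℝ := (Real.sqrt 2)⁻¹ with hr
    have hrr : (r : ℂ) * (r : ℂ) = 2⁻¹ := by
      have h2 : r * r = 2⁻¹ := by
        rw [hr, ← mul_inv, Real.mul_self_sqrt (by norm_num : (0:ℝ) ≤ 2)]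
      rw [← Complex.ofReal_mul, h2, Complex.ofReal_inv]
      norm_num
    have e1 := step (r : ℂ) (r : ℂ) (by
      simp only [Complex.star_def, Complex.conj_ofReal]
      linear_combination 2 * hrr)
    have e2 := step (r : ℂ) ((r : ℂ) * Complex.I) (by
      simp only [Complex.star_def, _root_.map_mul, Complex.conj_ofReal, Complex.conj_I]
      linear_combination 2 * hrr - (r:ℂ) * (r:ℂ) * Complex.I_mul_I)
    simp only [Complex.star_def, _root_.map_mul, Complex.conj_ofReal, Complex.conj_I] at e1 e2
    linear_combination e1 + Complex.I * e2
      + ((r:ℂ) * (r:ℂ) * S1 - (r:ℂ) * (r:ℂ) * S2) * Complex.I_mul_I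
      + (-2 * S1) * hrr
  -- Hermiticity of ρA
  obtain ⟨b0⟩ := ‹Nonempty B›
  have hHerm : ρAᴴ = ρA := by
    ext a a'
    rw [Matrix.conjTranspose_apply, ← key1 b0 a' a, ← key1 b0 a a', star_sum]
    refine Finset.sum_congr rfl fun c _ => ?_
    rw [star_mul', star_star]
    exact mul_comm _ _
  -- the matrices M b and their Gram relations
  set M : B → Matrix A B ℂ := fun b => Matrix.of fun a c => f b (a, c) with hM
  have hMF : ∀ b b', M b * (M b')ᴴ = if b = b' then ρA else 0 := by
    intro b b'
    ext a a'
    simp only [Matrix.mul_apply, Matrix.conjTranspose_apply, Matrix.of_apply, hM]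
    rcases eq_or_ne b b' with rfl | hne
    · simpa using key1 b a a'
    · simpa [hne] using key2 b b' hne a a'
  -- per-b normalization
  have hb1 : ∀ b, ∑ a, ∑ c, Complex.normSq (f b (a, c)) = 1 := by
    intro b
    have h1 := hnorm (Pi.single b 1)
    rw [hsingle_norm b] at h1
    have h2 : ((∑ a, ∑ c, Complex.normSq (f b (a, c)) : ℝ) : ℂ) = 1 := by
      push_cast
      rw [← h1, Fintype.sum_prod_type]
      refine Finset.sum_congr rfl fun a _ => Finset.sum_congr rfl fun c _ => ?_
      rw [mul_comm, Complex.star_def, Complex.mul_conj]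
    exact_mod_cast h2
  -- trace of ρA is one
  have htrρ : ∑ a, ρA a a = 1 := by
    have h1 := hnorm (Pi.single b0 1)
    rw [hsingle_norm b0] at h1
    rw [← h1, Fintype.sum_prod_type]
    refine Finset.sum_congr rfl fun a _ => ?_
    rw [← key1 b0 a a]
    exact Finset.sum_congr rfl fun c _ => (mul_comm _ _)
  set n := Fintype.card B with hn
  have hnpos : 0 < n := Fintype.card_pos
  set P : ℝ := ∑ a, ∑ a', Complex.normSq (ρA a a') with hP
  -- the matrix T = ∑ b (M b)ᴴ M b
  set Tm : Matrix B B ℂ := ∑ b, (M b)ᴴ * M b with hTm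
  have hTmH : Tmᴴ = Tm := by
    rw [hTm, Matrix.conjTranspose_sum]
    refine Finset.sum_congr rfl fun b _ => ?_
    rw [Matrix.conjTranspose_mul, Matrix.conjTranspose_conjTranspose]
  have htrace2 : Matrix.trace (Tm * Tm) = (n : ℂ) * Matrix.trace (ρA * ρAᴴ) := by
    have hterm : ∀ b b', Matrix.trace ((M b)ᴴ * M b * ((M b')ᴴ * M b'))
        = if b = b' then Matrix.trace (ρA * ρAᴴ) else 0 := by
      intro b b'
      calc Matrix.trace ((M b)ᴴ * M b * ((M b')ᴴ * M b'))
          = Matrix.trace ((M b * ((M b')ᴴ * M b')) * (M b)ᴴ) := by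
            rw [Matrix.mul_assoc, Matrix.trace_mul_comm]
        _ = Matrix.trace ((M b * (M b')ᴴ) * (M b' * (M b)ᴴ)) := by
            simp only [Matrix.mul_assoc]
        _ = Matrix.trace ((if b = b' then ρA else 0) * (if b' = b then ρA else 0)) := by
            rw [hMF, hMF]
        _ = if b = b' then Matrix.trace (ρA * ρAᴴ) else 0 := by
            rcases eq_or_ne b b' with rfl | hne
            · simp [hHerm]
            · simp [hne, Ne.symm hne]
    rw [hTm, Finset.sum_mul_sum]
    simp only [Matrix.trace_sum]
    rw [Finset.sum_congr rfl fun b _ => Finset.sum_congr rfl fun b' _ => hterm b b']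
    simp [Finset.sum_ite_eq', Finset.card_univ, hn, mul_comm]
  -- the purity inequality
  have hQP : ∑ c, ∑ c', Complex.normSq (Tm c c') = (n : ℝ) * P := by
    have h1 : Matrix.trace (Tm * Tm) = ∑ c, ∑ c', Tm c c' * star (Tm c c') := by
      conv_lhs => rw [show Tm * Tm = Tm * Tmᴴ from by rw [hTmH]]
      exact trace_mul_conjT Tm
    have h2 : Matrix.trace (ρA * ρAᴴ) = ∑ a, ∑ a', ρA a a' * star (ρA a a') :=
      trace_mul_conjT ρA
    have h3 : ((∑ c, ∑ c', Complex.normSq (Tm c c') : ℝ) : ℂ)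
        = (n : ℂ) * ((P : ℝ) : ℂ) := by
      calc ((∑ c, ∑ c', Complex.normSq (Tm c c') : ℝ) : ℂ)
          = ∑ c, ∑ c', Tm c c' * star (Tm c c') := by
            push_cast
            exact Finset.sum_congr rfl fun c _ => Finset.sum_congr rfl fun c' _ => by
              rw [Complex.star_def, Complex.mul_conj]
        _ = Matrix.trace (Tm * Tm) := h1.symm
        _ = (n : ℂ) * Matrix.trace (ρA * ρAᴴ) := htrace2
        _ = (n : ℂ) * ((P : ℝ) : ℂ) := by
          rw [h2, hP]
          congr 1
          push_cast
          exact Finset.sum_congr rfl fun a _ => Finset.sum_congr rfl fun a' _ => by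
            rw [Complex.star_def, Complex.mul_conj]
    exact_mod_cast h3
  -- diagonal of Tm
  set t : B → ℝ := fun c => ∑ b, ∑ a, Complex.normSq (f b (a, c)) with ht
  have hTdiag : ∀ c, Tm c c = ((t c : ℝ) : ℂ) := by
    intro c
    rw [hTm, ht]
    push_cast
    rw [Matrix.sum_apply]
    refine Finset.sum_congr rfl fun b _ => ?_
    rw [Matrix.mul_apply]
    refine Finset.sum_congr rfl fun a _ => ?_
    simp only [Matrix.conjTranspose_apply, Matrix.of_apply, hM]
    rw [Complex.star_def, mul_comm, Complex.mul_conj]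
  have hsum_t : ∑ c, t c = (n : ℝ) := by
    rw [ht]
    calc ∑ c, ∑ b, ∑ a, Complex.normSq (f b (a, c))
        = ∑ b, ∑ c, ∑ a, Complex.normSq (f b (a, c)) := Finset.sum_comm
      _ = ∑ b : B, (1 : ℝ) := by
          refine Finset.sum_congr rfl fun b _ => ?_
          rw [← hb1 b]
          exact Finset.sum_comm
      _ = (n : ℝ) := by simp [hn, Finset.card_univ]
  have hP1 : 1 ≤ P := by
    have hcheb : (∑ c, t c) ^ 2 ≤ (n : ℝ) * ∑ c, (t c) ^ 2 := by
      simpa [Finset.card_univ, hn] using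
        sq_sum_le_card_mul_sum_sq (s := (Finset.univ : Finset B)) (f := t)
    have hdiag_le : ∑ c, (t c) ^ 2 ≤ ∑ c, ∑ c', Complex.normSq (Tm c c') := by
      refine Finset.sum_le_sum fun c _ => ?_
      have he : (t c) ^ 2 = Complex.normSq (Tm c c) := by
        rw [hTdiag c, Complex.normSq_ofReal]; ring
      rw [he]
      exact Finset.single_le_sum (f := fun c' => Complex.normSq (Tm c c'))
        (fun i _ => Complex.normSq_nonneg _) (Finset.mem_univ c)
    have hnr : 0 < (n : ℝ) := by exact_mod_cast hnpos
    rw [hsum_t] at hcheb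
    rw [hQP] at hdiag_le
    have h4 : (n : ℝ) ^ 2 ≤ (n : ℝ) ^ 2 * P := by
      calc (n : ℝ) ^ 2 ≤ (n : ℝ) * ∑ c, (t c) ^ 2 := hcheb
        _ ≤ (n : ℝ) * ((n : ℝ) * P) := mul_le_mul_of_nonneg_left hdiag_le hnr.le
        _ = (n : ℝ) ^ 2 * P := by ring
    have h5 : (n : ℝ) ^ 2 * 1 ≤ (n : ℝ) ^ 2 * P := by linarith
    exact le_of_mul_le_mul_left h5 (by positivity)
  -- spectral decomposition of ρA
  have hHe : ρA.IsHermitian := hHerm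
  have hPSD : ρA.PosSemidef := by
    have e2 : M b0 * (M b0)ᴴ = ρA := by simpa using hMF b0 b0
    rw [← e2]
    exact Matrix.posSemidef_self_mul_conjTranspose _
  set lam : A → ℝ := hHe.eigenvalues with hlam
  have hlam0 : ∀ i, 0 ≤ lam i := fun i => hPSD.eigenvalues_nonneg i
  set V : Matrix A A ℂ := (Matrix.IsHermitian.eigenvectorUnitary hHe : Matrix A A ℂ) with hV
  set D : Matrix A A ℂ := Matrix.diagonal (RCLike.ofReal ∘ lam) with hD
  have hspec : ρA = V * D * star V := hHe.spectral_theorem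
  have hVu : star V * V = 1 := by
    rw [hV]
    exact Unitary.coe_star_mul_self _
  have hsum_lam : ∑ i, lam i = 1 := by
    have h1 : Matrix.trace ρA = ((∑ i, lam i : ℝ) : ℂ) := by
      rw [hspec, Matrix.trace_mul_cycle, hVu, one_mul, hD, Matrix.trace_diagonal]
      push_cast
      rfl
    have h2 : Matrix.trace ρA = 1 := htrρ
    rw [h2] at h1
    exact_mod_cast h1.symm
  have hPtrace : Matrix.trace (ρA * ρAᴴ) = ((P : ℝ) : ℂ) := by
    rw [trace_mul_conjT, hP]
    push_cast
    exact Finset.sum_congr rfl fun a _ => Finset.sum_congr rfl fun a' _ => by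
      rw [Complex.star_def, Complex.mul_conj]
  have hsum_lam2 : ∑ i, (lam i) ^ 2 = P := by
    have hDD : ρA * ρAᴴ = V * (D * D) * star V := by
      rw [hHerm]
      conv_lhs => rw [hspec]
      calc (V * D * star V) * (V * D * star V)
          = V * D * ((star V * V) * (D * star V)) := by simp only [Matrix.mul_assoc]
        _ = V * (D * D) * star V := by
            rw [hVu, one_mul]
            simp only [Matrix.mul_assoc]
    have h1 : Matrix.trace (ρA * ρAᴴ) = ((∑ i, (lam i) ^ 2 : ℝ) : ℂ) := by
      rw [hDD, Matrix.trace_mul_cycle, hVu, one_mul, hD, Matrix.diagonal_mul_diagonal,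
        Matrix.trace_diagonal]
      push_cast
      refine Finset.sum_congr rfl fun i _ => ?_
      simp [sq]
    rw [hPtrace] at h1
    exact_mod_cast h1.symm
  -- eigenvalues: exactly one equals 1
  have hsq : (∑ i, lam i) ^ 2
      = ∑ i, (lam i) ^ 2 + ∑ i, ∑ j ∈ Finset.univ.erase i, lam i * lam j := by
    rw [sq, Finset.sum_mul_sum, ← Finset.sum_add_distrib]
    refine Finset.sum_congr rfl fun i _ => ?_
    rw [← Finset.add_sum_erase _ _ (Finset.mem_univ i), sq]
  have hRnonneg : 0 ≤ ∑ i, ∑ j ∈ Finset.univ.erase i, lam i * lam j :=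
    Finset.sum_nonneg fun i _ => Finset.sum_nonneg fun j _ =>
      mul_nonneg (hlam0 i) (hlam0 j)
  have hR0 : ∑ i, ∑ j ∈ Finset.univ.erase i, lam i * lam j = 0 := by
    rw [hsum_lam, hsum_lam2] at hsq
    nlinarith [hP1]
  have hcross : ∀ i j, i ≠ j → lam i * lam j = 0 := by
    intro i j hij
    have h1 := (Finset.sum_eq_zero_iff_of_nonneg fun i _ =>
      Finset.sum_nonneg fun j _ => mul_nonneg (hlam0 i) (hlam0 j)).mp hR0 i (Finset.mem_univ i)
    exact (Finset.sum_eq_zero_iff_of_nonneg fun j _ =>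
      mul_nonneg (hlam0 i) (hlam0 j)).mp h1 j (Finset.mem_erase.mpr ⟨(Ne.symm hij), Finset.mem_univ j⟩)
  have hex : ∃ i, lam i ≠ 0 := by
    by_contra hno
    push_neg at hno
    rw [Finset.sum_eq_zero (fun i _ => hno i)] at hsum_lam
    norm_num at hsum_lam
  obtain ⟨i0, hi0⟩ := hex
  have hzero : ∀ j, j ≠ i0 → lam j = 0 := by
    intro j hj
    rcases mul_eq_zero.mp (hcross i0 j (Ne.symm hj)) with h | h
    · exact absurd h hi0
    · exact h
  have hone : lam i0 = 1 := by
    rw [← hsum_lam, Finset.sum_eq_single i0 (fun j _ hj => hzero j hj) (fun hi => absurd (Finset.mem_univ i0) hi)]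
  set χ : A → ℂ := fun a => V a i0 with hχ
  have hχnorm : ∑ a, star (χ a) * χ a = 1 := by
    have h6 : (star V * V) i0 i0 = (1 : Matrix A A ℂ) i0 i0 := by rw [hVu]
    rw [Matrix.mul_apply] at h6
    rw [Matrix.one_apply_eq] at h6
    rw [← h6]
    exact Finset.sum_congr rfl fun a _ => by rw [Matrix.star_apply, hχ]
  have hρχ : ρA = projv χ := by
    ext a a'
    rw [hspec, Matrix.mul_apply]
    have hDval : ∀ j, (RCLike.ofReal ∘ lam) j = (if j = i0 then (1 : ℂ) else 0) := by
      intro j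
      rcases eq_or_ne j i0 with rfl | hj
      · simp [hone]
      · simp [hj, hzero j hj]
    have hstep : ∀ j, (V * D) a j * (star V) j a'
        = (if j = i0 then (1 : ℂ) else 0) * (V a j * star (V a' j)) := by
      intro j
      rw [hD, Matrix.mul_diagonal, Matrix.star_apply, hDval j]
      ring
    rw [Finset.sum_congr rfl fun j _ => hstep j]
    simp [projv, hχ, Finset.sum_ite_eq', ite_mul]
  refine ⟨⟨χ, hχnorm, hρχ⟩, ?_⟩
  -- part 2: product vectors
  intro ψ hψ
  have hGψ : ∀ a a', ∑ c, (U *ᵥ vtens φ ψ) (a, c) * star ((U *ᵥ vtens φ ψ) (a', c))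
      = χ a * star (χ a') := by
    intro a a'
    rw [hG ψ hψ a a', hρχ]
    rfl
  have hexa0 : ∃ a0, χ a0 ≠ 0 := by
    by_contra hno
    push_neg at hno
    rw [Finset.sum_eq_zero (fun a _ => by rw [hno a, mul_zero])] at hχnorm
    norm_num at hχnorm
  obtain ⟨a0, ha0⟩ := hexa0
  refine ⟨χ, fun c => (U *ᵥ vtens φ ψ) (a0, c) / χ a0, ?_⟩
  funext p
  obtain ⟨a, c⟩ := p
  set v : A × B → ℂ := fun p => (U *ᵥ vtens φ ψ) p with hv
  set k : ℂ := χ a / χ a0 with hkdef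
  have hk : k * χ a0 = χ a := div_mul_cancel₀ _ ha0
  have hzero_sum : ∑ c', (v (a, c') - k * v (a0, c')) * star (v (a, c') - k * v (a0, c')) = 0 := by
    have expand : ∑ c', (v (a, c') - k * v (a0, c')) * star (v (a, c') - k * v (a0, c'))
        = (∑ c', v (a, c') * star (v (a, c'))) - star k * (∑ c', v (a, c') * star (v (a0, c')))
          - k * (∑ c', v (a0, c') * star (v (a, c')))
          + k * star k * (∑ c', v (a0, c') * star (v (a0, c'))) := by
      simp only [Finset.mul_sum, ← Finset.sum_sub_distrib, ← Finset.sum_add_distrib]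
      refine Finset.sum_congr rfl fun c' _ => ?_
      simp only [star_sub, star_mul']
      ring
    rw [expand, hGψ a a, hGψ a a0, hGψ a0 a, hGψ a0 a0, ← hk]
    simp only [star_mul']
    ring
  have hterm0 : ∀ c', v (a, c') - k * v (a0, c') = 0 := by
    have hr : ∑ c', Complex.normSq (v (a, c') - k * v (a0, c')) = 0 := by
      have h7 : ((∑ c', Complex.normSq (v (a, c') - k * v (a0, c')) : ℝ) : ℂ) = 0 := by
        push_cast
        rw [← hzero_sum]
        exact Finset.sum_congr rfl fun c' _ => by rw [Complex.star_def, Complex.mul_conj]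
      exact_mod_cast h7
    intro c'
    exact Complex.normSq_eq_zero.mp
      ((Finset.sum_eq_zero_iff_of_nonneg fun i _ => Complex.normSq_nonneg _).mp hr c'
        (Finset.mem_univ c'))
  have h8 : v (a, c) = k * v (a0, c) := by
    have h9 := hterm0 c
    linear_combination h9
  show v (a, c) = χ a * (v (a0, c) / χ a0)
  rw [h8, hkdef]
  ring
end
end

section
/- Let Λ be a channel on the bipartite system A × B and let U_A, U_B be unitaries on ℂ^A and ℂ^B respectively. If for all unit vectors |ψ⟩ ∈ ℂ^A and |φ⟩ ∈ ℂ^B one has Tr_B(Λ[|ψ⟩⟨ψ| ⊗ |φ⟩⟨φ|]) = U_A|ψ⟩⟨ψ|U_A† and Tr_A(Λ[|ψ⟩⟨ψ| ⊗ |φ⟩⟨φ|]) = U_B|φ⟩⟨φ|U_B†, then Λ[X] = (U_A ⊗ U_B) X (U_A ⊗ U_B)† for every matrix X; i.e., the equivalence class of causal channels with reduced maps given by U_A and U_B contains only the product unitary channel. -/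
open Matrix BigOperators
open scoped Kronecker ComplexOrder

noncomputable section

/-!
`Λ (|ψ⟩⟨ψ| ⊗ |φ⟩⟨φ|)` is positive semidefinite and its `Tr_B`-marginal `U_A |ψ⟩⟨ψ| U_A†` is
the pure state of the unit vector `χ = U_A ψ`. A positive semidefinite `ρ` whose `Tr_B`-marginal is
`|χ⟩⟨χ|` annihilates every `u ⊗ e_b` with `u ⊥ χ` (the diagonal terms sum to `⟨u|χ⟩⟨χ|u⟩ = 0`),
so `ρ = |χ⟩⟨χ| ⊗ Tr_A ρ`; with the second marginal this makes `Λ` agree with the product unitary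
channel on all products of pure states. By polarization these products span all matrices, and
both maps are linear.
-/

section Projector

variable {n : Type*}

lemma projv_eq_vecMulVec (v : n → ℂ) : projv v = vecMulVec v (star v) := rfl

lemma posSemidef_projv [Fintype n] (v : n → ℂ) : (projv v).PosSemidef :=
  posSemidef_vecMulVec_self_star v

lemma projv_smul (c : ℂ) (v : n → ℂ) : projv (c • v) = (c * star c) • projv v := by
  ext i j
  simp only [projv, of_apply, Pi.smul_apply, smul_eq_mul, Matrix.smul_apply, star_mul']
  ring

lemma projv_vtens {m : Type*} (x : m → ℂ) (y : n → ℂ) :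
    projv (vtens x y) = projv x ⊗ₖ projv y := by
  ext p q
  simp only [projv, vtens, of_apply, kroneckerMap_apply, star_mul']
  ring

lemma star_vtens {m : Type*} (u : m → ℂ) (v : n → ℂ) :
    star (vtens u v) = vtens (star u) (star v) := by
  ext p
  simp [vtens]

lemma mul_projv_mul_conjTranspose {m : Type*} [Fintype n] (U : Matrix m n ℂ) (v : n → ℂ) :
    U * projv v * Uᴴ = projv (U *ᵥ v) := by
  rw [projv_eq_vecMulVec, mul_vecMulVec, vecMulVec_mul, projv_eq_vecMulVec, star_mulVec]

lemma star_mulVec_dotProduct_mulVec_of_mem_unitaryGroup [Fintype n] [DecidableEq n]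
    {U : Matrix n n ℂ} (hU : U ∈ unitaryGroup n ℂ) (v : n → ℂ) :
    star (U *ᵥ v) ⬝ᵥ U *ᵥ v = star v ⬝ᵥ v := by
  rw [star_mulVec, dotProduct_mulVec, vecMul_vecMul, ← star_eq_conjTranspose,
    (mem_unitaryGroup_iff').mp hU, vecMul_one]

lemma vecMulVec_star_polarization [Fintype n] (x y : n → ℂ) :
    (4 : ℂ) • vecMulVec x (star y) = projv (x + y) - projv (x - y)
      + Complex.I • projv (x + Complex.I • y) - Complex.I • projv (x - Complex.I • y) := by
  ext i j
  simp only [projv, vecMulVec, of_apply, Matrix.sub_apply, Matrix.add_apply, Matrix.smul_apply,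
    Pi.add_apply, Pi.sub_apply, Pi.smul_apply, Pi.star_apply, smul_eq_mul, star_add, star_sub,
    star_mul', Complex.star_def, Complex.conj_I]
  ring_nf
  rw [Complex.I_sq]
  ring

end Projector

lemma span_image2_kronecker_eq_top {R l m n p : Type*} [CommSemiring R] [Finite l] [Finite m]
    [Finite n] [Finite p] {s : Set (Matrix l m R)} {t : Set (Matrix n p R)}
    (hs : Submodule.span R s = ⊤) (ht : Submodule.span R t = ⊤) :
    Submodule.span R (Set.image2 (· ⊗ₖ ·) s t) = ⊤ := by
  classical
  change Submodule.span R (Set.image2 (fun a b => kroneckerBilinear (R := R) a b) s t) = ⊤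
  rw [← Submodule.map₂_span_span, hs, ht, eq_top_iff]
  intro M _
  refine M.induction_on' (Submodule.zero_mem _) (fun _ _ => Submodule.add_mem _) ?_
  rintro ⟨i, i'⟩ ⟨j, j'⟩ x
  rw [← mul_one x, ← single_kronecker_single]
  exact Submodule.apply_mem_map₂ _ Submodule.mem_top Submodule.mem_top

section Span

variable {n : Type*} [Fintype n]

lemma projv_mem_span_projv_unit (v : n → ℂ) :
    projv v ∈ Submodule.span ℂ (projv '' {u | star u ⬝ᵥ u = 1}) := by
  rcases eq_or_ne v 0 with rfl | hv
  · rw [show projv (0 : n → ℂ) = 0 by ext; simp [projv]]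
    exact Submodule.zero_mem _
  obtain ⟨r, hr, hrv⟩ := RCLike.pos_iff_exists_ofReal.mp <|
    (dotProduct_star_self_nonneg v).lt_of_ne' (dotProduct_star_self_eq_zero.not.mpr hv)
  set c : ℂ := (Real.sqrt r : ℂ)
  have hc : c * star c = star v ⬝ᵥ v := by
    rw [← hrv, Complex.star_def, Complex.conj_ofReal, ← Complex.ofReal_mul,
      Real.mul_self_sqrt hr.le]
    rfl
  have hc0 : c ≠ 0 := Complex.ofReal_ne_zero.mpr (Real.sqrt_ne_zero'.mpr hr)
  have hunit : star (c⁻¹ • v) ⬝ᵥ c⁻¹ • v = 1 := by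
    rw [star_smul, smul_dotProduct, dotProduct_smul, smul_smul, smul_eq_mul, ← hc, star_inv₀]
    field_simp
    exact div_self (star_ne_zero.mpr hc0)
  rw [← smul_inv_smul₀ hc0 v, projv_smul]
  exact Submodule.smul_mem _ _ (Submodule.subset_span ⟨_, hunit, rfl⟩)

lemma span_projv_unit_eq_top :
    Submodule.span ℂ (projv '' {u : n → ℂ | star u ⬝ᵥ u = 1}) = ⊤ := by
  classical
  set S := Submodule.span ℂ (projv '' {u : n → ℂ | star u ⬝ᵥ u = 1})
  have hrank_one (x y : n → ℂ) : vecMulVec x (star y) ∈ S := by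
    rw [(eq_inv_smul_iff₀ (by norm_num : (4 : ℂ) ≠ 0)).mpr (vecMulVec_star_polarization x y)]
    refine S.smul_mem _ (S.sub_mem (S.add_mem (S.sub_mem ?_ ?_) (S.smul_mem _ ?_))
      (S.smul_mem _ ?_)) <;> exact projv_mem_span_projv_unit _
  refine eq_top_iff.mpr fun M _ => M.induction_on' S.zero_mem (fun _ _ => S.add_mem) ?_
  intro i j x
  have hstar : (Pi.single j 1 : n → ℂ) = star (Pi.single j 1) := by rw [← Pi.single_star, star_one]
  rw [← mul_one x, ← smul_eq_mul, ← smul_single, single_eq_single_vecMulVec_single, hstar]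
  exact S.smul_mem _ (hrank_one _ _)

end Span

section PureMarginal

variable {A B : Type*} [Fintype A] [Fintype B] [DecidableEq B]

lemma dotProduct_vtens_single (w : A × B → ℂ) (u : A → ℂ) (b : B) :
    w ⬝ᵥ vtens u (Pi.single b 1) = ∑ a, w (a, b) * u a := by
  simp [dotProduct, vtens, Fintype.sum_prod_type, Pi.single_apply]

lemma sum_dotProduct_mulVec_vtens_single (ρ : Matrix (A × B) (A × B) ℂ) (u : A → ℂ) :
    ∑ b, star (vtens u (Pi.single b 1)) ⬝ᵥ ρ *ᵥ vtens u (Pi.single b 1) =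
      star u ⬝ᵥ trB ρ *ᵥ u := by
  have hstar (b : B) : star (Pi.single b 1 : B → ℂ) = Pi.single b 1 := by
    rw [← Pi.single_star, star_one]
  simp only [star_vtens, hstar, dotProduct_comm (vtens _ _), dotProduct_vtens_single]
  simp only [mulVec, dotProduct_vtens_single]
  simp only [mulVec, dotProduct, trB, of_apply, Finset.sum_mul, Finset.mul_sum]
  rw [Finset.sum_comm]
  refine Finset.sum_congr rfl fun a _ => ?_
  rw [Finset.sum_comm]
  exact Finset.sum_congr rfl fun a' _ => Finset.sum_congr rfl fun b _ => by ring

lemma Matrix.PosSemidef.mulVec_vtens_single_eq_zero {ρ : Matrix (A × B) (A × B) ℂ}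
    (hρ : ρ.PosSemidef) {χ : A → ℂ} (htr : trB ρ = projv χ) {u : A → ℂ}
    (hu : star χ ⬝ᵥ u = 0) (b : B) :
    ρ *ᵥ vtens u (Pi.single b 1) = 0 := by
  have hsum : ∑ b, star (vtens u (Pi.single b 1)) ⬝ᵥ ρ *ᵥ vtens u (Pi.single b 1) = 0 := by
    rw [sum_dotProduct_mulVec_vtens_single, htr, projv_eq_vecMulVec, vecMulVec_mulVec, hu]
    simp
  rw [← hρ.dotProduct_mulVec_zero_iff]
  exact (Finset.sum_eq_zero_iff_of_nonneg fun b _ => hρ.dotProduct_mulVec_nonneg _).mp hsum b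
    (Finset.mem_univ b)

theorem Matrix.PosSemidef.eq_projv_kronecker_trA {ρ : Matrix (A × B) (A × B) ℂ}
    (hρ : ρ.PosSemidef) {χ : A → ℂ} (hχ : star χ ⬝ᵥ χ = 1) (htr : trB ρ = projv χ) :
    ρ = projv χ ⊗ₖ trA ρ := by
  classical
  have hcol (p : A × B) (a : A) (b : B) : ρ p (a, b) = star (χ a) * ∑ c, ρ p (c, b) * χ c := by
    have hu : star χ ⬝ᵥ (Pi.single a 1 - star (χ a) • χ) = 0 := by
      rw [dotProduct_sub, dotProduct_single, dotProduct_smul, hχ]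
      simp
    have := congrFun (hρ.mulVec_vtens_single_eq_zero htr hu b) p
    simp only [mulVec, dotProduct_vtens_single, Pi.sub_apply, Pi.smul_apply, smul_eq_mul,
      mul_sub, Finset.sum_sub_distrib, Pi.single_apply, mul_ite, mul_one, mul_zero,
      Finset.sum_ite_eq', Finset.mem_univ, if_true, Pi.zero_apply, sub_eq_zero] at this
    rw [this, Finset.mul_sum]
    exact Finset.sum_congr rfl fun c _ => by ring
  have hrow (a : A) (b : B) (q : A × B) : ρ (a, b) q = χ a * ∑ c, star (χ c) * ρ (c, b) q := by
    rw [← hρ.1.apply (a, b) q, hcol, star_mul', star_star, star_sum]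
    simp only [star_mul', hρ.1.apply]
    exact congrArg _ (Finset.sum_congr rfl fun c _ => mul_comm _ _)
  set τ : Matrix B B ℂ := of fun b b' => ∑ c, ∑ d, star (χ c) * ρ (c, b) (d, b') * χ d
  have hfac (a a' : A) (b b' : B) : ρ (a, b) (a', b') = χ a * star (χ a') * τ b b' := by
    simp only [hrow a b, hcol _ a' b', τ, of_apply, Finset.mul_sum]
    exact Finset.sum_congr rfl fun c _ => Finset.sum_congr rfl fun d _ => by ring
  have htrA : trA ρ = τ := by
    ext b b'
    simp only [trA, of_apply, hfac, ← Finset.sum_mul]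
    rw [show ∑ a, χ a * star (χ a) = χ ⬝ᵥ star χ from rfl, dotProduct_comm, hχ, one_mul]
  ext ⟨a, b⟩ ⟨a', b'⟩
  rw [hfac, htrA]
  rfl

end PureMarginal

section Channel

variable {n : Type*} [Fintype n] [DecidableEq n] {Λ : Matrix n n ℂ → Matrix n n ℂ}

lemma IsChannel.isLinearMap (hΛ : IsChannel Λ) : IsLinearMap ℂ Λ := by
  obtain ⟨m, K, hK, -⟩ := hΛ
  refine ⟨fun X Y => ?_, fun c X => ?_⟩
  · simp only [hK, mul_add, add_mul, Finset.sum_add_distrib]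
  · simp only [hK, Matrix.mul_smul, Matrix.smul_mul, Finset.smul_sum]

lemma IsChannel.posSemidef_apply (hΛ : IsChannel Λ) {X : Matrix n n ℂ} (hX : X.PosSemidef) :
    (Λ X).PosSemidef := by
  obtain ⟨m, K, hK, -⟩ := hΛ
  rw [hK]
  exact posSemidef_sum _ fun i _ => hX.mul_mul_conjTranspose_same (K i)

end Channel

theorem stmt_13_general {A B : Type*} [Fintype A] [Fintype B] [DecidableEq A] [DecidableEq B]
    (Λ : Matrix (A × B) (A × B) ℂ → Matrix (A × B) (A × B) ℂ) (hΛ : IsChannel Λ)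
    (UA : Matrix A A ℂ) (hUA : UA ∈ Matrix.unitaryGroup A ℂ)
    (UB : Matrix B B ℂ)
    (h : ∀ ψ : A → ℂ, (∑ a, star (ψ a) * ψ a = 1) →
         ∀ φ : B → ℂ, (∑ b, star (φ b) * φ b = 1) →
          trB (Λ (projv (vtens ψ φ))) = UA * projv ψ * UAᴴ ∧
          trA (Λ (projv (vtens ψ φ))) = UB * projv φ * UBᴴ) :
    ∀ X : Matrix (A × B) (A × B) ℂ,
      Λ X = (UA ⊗ₖ UB) * X * (UA ⊗ₖ UB)ᴴ := by
  set U := UA ⊗ₖ UB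
  have hagree : Set.EqOn hΛ.isLinearMap.mk' (LinearMap.mulRight ℂ Uᴴ ∘ₗ LinearMap.mulLeft ℂ U)
      (Set.image2 (· ⊗ₖ ·) (projv '' {ψ | star ψ ⬝ᵥ ψ = 1})
        (projv '' {φ | star φ ⬝ᵥ φ = 1})) := by
    rintro _ ⟨_, ⟨ψ, hψ, rfl⟩, _, ⟨φ, hφ, rfl⟩, rfl⟩
    obtain ⟨hA, hB⟩ := h ψ hψ φ hφ
    rw [projv_vtens, mul_projv_mul_conjTranspose] at hA hB
    have hpos : (Λ (projv ψ ⊗ₖ projv φ)).PosSemidef :=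
      projv_vtens ψ φ ▸ hΛ.posSemidef_apply (posSemidef_projv _)
    have hunit : star (UA *ᵥ ψ) ⬝ᵥ UA *ᵥ ψ = 1 :=
      (star_mulVec_dotProduct_mulVec_of_mem_unitaryGroup hUA ψ).trans hψ
    simp only [IsLinearMap.mk'_apply, LinearMap.comp_apply, LinearMap.mulLeft_apply,
      LinearMap.mulRight_apply, U]
    rw [hpos.eq_projv_kronecker_trA hunit hA, hB, conjTranspose_kronecker, ← mul_kronecker_mul,
      ← mul_kronecker_mul, mul_projv_mul_conjTranspose, mul_projv_mul_conjTranspose]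
  have hΛU : hΛ.isLinearMap.mk' = LinearMap.mulRight ℂ Uᴴ ∘ₗ LinearMap.mulLeft ℂ U :=
    LinearMap.ext_on
      (span_image2_kronecker_eq_top span_projv_unit_eq_top span_projv_unit_eq_top) hagree
  exact fun X => LinearMap.congr_fun hΛU X

/-- a channel whose two reduced maps on pure product inputs coincide with
the unitary channels of `U_A` and `U_B` must be the product unitary channel
`X ↦ (U_A ⊗ U_B) X (U_A ⊗ U_B)†`. -/
theorem stmt_13 {A B : Type*} [Fintype A] [Fintype B] [DecidableEq A] [DecidableEq B]
    [Nonempty A] [Nonempty B]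
    (Λ : Matrix (A × B) (A × B) ℂ → Matrix (A × B) (A × B) ℂ) (hΛ : IsChannel Λ)
    (UA : Matrix A A ℂ) (hUA : UA ∈ Matrix.unitaryGroup A ℂ)
    (UB : Matrix B B ℂ) (hUB : UB ∈ Matrix.unitaryGroup B ℂ)
    (h : ∀ ψ : A → ℂ, (∑ a, star (ψ a) * ψ a = 1) →
         ∀ φ : B → ℂ, (∑ b, star (φ b) * φ b = 1) →
          trB (Λ (projv (vtens ψ φ))) = UA * projv ψ * UAᴴ ∧
          trA (Λ (projv (vtens ψ φ))) = UB * projv φ * UBᴴ) :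
    ∀ X : Matrix (A × B) (A × B) ℂ,
      Λ X = (UA ⊗ₖ UB) * X * (UA ⊗ₖ UB)ᴴ :=
  stmt_13_general Λ hΛ UA hUA UB h
end
end
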